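/- arXiv:2101.00243 — 2 statements merged into one kernel-verified Lean document; each statement's English description precedes it below -/
import Mathlib

section
/- Let X ⊂ ℝⁿ be a finite set of points and G ⊂ ℝ[x₁,…,xₙ] a set of polynomials generating the vanishing ideal I(X). Fix a positive integer t and suppose that every polynomial in I(X) of total degree at most t lies in the ideal generated by the elements of G of degree at most t. Then for any g ∈ I(X) of total degree at most t+1, if all partial derivatives ∂g/∂x_k (k = 1,…,n) vanish at every point of X, then g lies in the ideal generated by the elements of G of degree at most t. -/
/-!
The operator `∑ₖ xₖ ∂ₖ` multiplies each monomial by its degree (Euler), so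
`h = (t + 1) g - ∑ₖ xₖ ∂ₖ g` loses the degree-`(t + 1)` part of `g` and has degree at most `t`.
Both `h` and every `∂ₖ g` vanish on `X` and have degree at most `t`, hence lie in `⟨Gᵗ⟩`;
therefore so does `(t + 1) g = h + ∑ₖ xₖ ∂ₖ g`, and dividing by `t + 1` gives `g ∈ ⟨Gᵗ⟩`.
-/

open MvPolynomial

namespace MvPolynomial

variable {σ R : Type*}

section CommSemiring

variable [CommSemiring R]

theorem totalDegree_pderiv_le (i : σ) (p : MvPolynomial σ R) :
    (pderiv i p).totalDegree ≤ p.totalDegree - 1 := by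
  refine Finset.sup_le fun m hm => ?_
  have hcoeff : coeff (m + Finsupp.single i 1) p ≠ 0 := by
    intro h
    rw [mem_support_iff, coeff_pderiv, h, zero_mul] at hm
    exact hm rfl
  have := le_totalDegree (mem_support_iff.mpr hcoeff)
  change (m + Finsupp.single i 1).degree ≤ _ at this
  rw [map_add, Finsupp.degree_single] at this
  change m.degree ≤ _
  omega

theorem coeff_X_mul_pderiv (i : σ) (m : σ →₀ ℕ) (p : MvPolynomial σ R) :
    coeff m (X i * pderiv i p) = m i • coeff m p := by
  classical
  induction p using MvPolynomial.induction_on' with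
  | monomial s r =>
    rw [X_mul_pderiv_monomial, coeff_smul, coeff_monomial]
    split_ifs with h
    · rw [h]
    · rw [smul_zero, smul_zero]
  | add p q hp hq => rw [map_add, mul_add, coeff_add, coeff_add, hp, hq, smul_add]

theorem coeff_sum_X_mul_pderiv [Fintype σ] (m : σ →₀ ℕ) (p : MvPolynomial σ R) :
    coeff m (∑ i, X i * pderiv i p) = m.degree • coeff m p := by
  simp only [coeff_sum, coeff_X_mul_pderiv, ← Finset.sum_smul, Finsupp.degree_eq_sum]

end CommSemiring

theorem totalDegree_nsmul_sub_sum_X_mul_pderiv_le [CommRing R] [Fintype σ] {d : ℕ}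
    {p : MvPolynomial σ R} (hp : p.totalDegree ≤ d + 1) :
    ((d + 1) • p - ∑ i, X i * pderiv i p).totalDegree ≤ d := by
  refine Finset.sup_le fun m hm => ?_
  rw [mem_support_iff, coeff_sub, coeff_smul, coeff_sum_X_mul_pderiv] at hm
  have hcoeff : coeff m p ≠ 0 := fun h => hm (by rw [h, smul_zero, smul_zero, sub_zero])
  have hdeg : m.degree ≤ d + 1 := (le_totalDegree (mem_support_iff.mpr hcoeff)).trans hp
  have hne : m.degree ≠ d + 1 := fun h => hm (by rw [h, sub_self])
  change m.degree ≤ d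
  omega

end MvPolynomial

theorem stmt_1_general (n : ℕ) (X : Finset (Fin n → ℝ)) (G : Set (MvPolynomial (Fin n) ℝ))
    (t : ℕ)
    (hind : ∀ p : MvPolynomial (Fin n) ℝ, (∀ x ∈ X, MvPolynomial.eval x p = 0) →
      p.totalDegree ≤ t →
      p ∈ Ideal.span {g' | g' ∈ G ∧ g'.totalDegree ≤ t})
    (g : MvPolynomial (Fin n) ℝ)
    (hgvan : ∀ x ∈ X, MvPolynomial.eval x g = 0)
    (hgdeg : g.totalDegree ≤ t + 1)
    (hgrad : ∀ k : Fin n, ∀ x ∈ X, MvPolynomial.eval x (MvPolynomial.pderiv k g) = 0) :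
    g ∈ Ideal.span {g' | g' ∈ G ∧ g'.totalDegree ≤ t} := by
  set J := Ideal.span {g' | g' ∈ G ∧ g'.totalDegree ≤ t}
  have hpderiv : ∀ k, pderiv k g ∈ J := fun k =>
    hind _ (hgrad k) ((totalDegree_pderiv_le k g).trans (by omega))
  have heuler : ∑ k, MvPolynomial.X k * pderiv k g ∈ J :=
    J.sum_mem fun k _ => J.mul_mem_left _ (hpderiv k)
  have hrest : (t + 1) • g - ∑ k, MvPolynomial.X k * pderiv k g ∈ J := by
    refine hind _ (fun x hx => ?_) (totalDegree_nsmul_sub_sum_X_mul_pderiv_le hgdeg)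
    simp [hgvan x hx, hgrad _ x hx]
  have hscaled : (t + 1) • g ∈ J := by
    simpa using J.add_mem hrest heuler
  have hunit : ((t + 1 : ℝ)⁻¹ * (t + 1)) • g ∈ J := by
    rw [mul_smul]
    exact J.smul_of_tower_mem _ (by exact_mod_cast hscaled)
  rwa [inv_mul_cancel₀ (by positivity), one_smul] at hunit

theorem stmt_1 (n : ℕ) (X : Finset (Fin n → ℝ)) (G : Set (MvPolynomial (Fin n) ℝ))
    (hgen : ∀ p : MvPolynomial (Fin n) ℝ,
      (∀ x ∈ X, MvPolynomial.eval x p = 0) ↔ p ∈ Ideal.span G)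
    (t : ℕ) (ht : 0 < t)
    (hind : ∀ p : MvPolynomial (Fin n) ℝ, (∀ x ∈ X, MvPolynomial.eval x p = 0) →
      p.totalDegree ≤ t →
      p ∈ Ideal.span {g' | g' ∈ G ∧ g'.totalDegree ≤ t})
    (g : MvPolynomial (Fin n) ℝ)
    (hgvan : ∀ x ∈ X, MvPolynomial.eval x g = 0)
    (hgdeg : g.totalDegree ≤ t + 1)
    (hgrad : ∀ k : Fin n, ∀ x ∈ X, MvPolynomial.eval x (MvPolynomial.pderiv k g) = 0) :
    g ∈ Ideal.span {g' | g' ∈ G ∧ g'.totalDegree ≤ t} :=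
  stmt_1_general n X G t hind g hgvan hgdeg hgrad
end

section
/- Let O ⊂ ℝ[x₁,…,xₙ] be an order ideal whose O-border basis B generates the vanishing ideal I(X) of a finite set X ⊂ ℝⁿ. Then for every g ∈ B, the gradient of g does not vanish at all points of X; i.e., there exist x ∈ X and k ∈ {1,…,n} with (∂g/∂x_k)(x) ≠ 0. -/
open MvPolynomial

theorem stmt_10 (n : ℕ) (X : Finset (Fin n → ℝ)) (O : Finset (Fin n →₀ ℕ))
    -- `O` is an order ideal
    (horder : ∀ a ∈ O, ∀ b : Fin n →₀ ℕ, b ≤ a → b ∈ O)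
    -- border-basis property: any nonzero linear combination of the monomials in `O`
    -- is nonvanishing for `X`
    (hindep : ∀ p ∈ Submodule.span ℝ
        ((fun a => MvPolynomial.monomial a (1 : ℝ)) '' (O : Set (Fin n →₀ ℕ))),
      p ≠ 0 → ∃ x ∈ X, MvPolynomial.eval x p ≠ 0)
    -- `g` is a border basis polynomial: `g = b − Σ_{o∈O} c_o·o` with `b` in the border
    (g : MvPolynomial (Fin n) ℝ) (b : Fin n →₀ ℕ) (c : (Fin n →₀ ℕ) → ℝ)
    (hb : (∃ o ∈ O, ∃ k : Fin n, b = Finsupp.single k 1 + o) ∧ b ∉ O)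
    (hgdef : g = MvPolynomial.monomial b (1 : ℝ)
      - ∑ o ∈ O, (c o) • MvPolynomial.monomial o (1 : ℝ))
    -- `g` belongs to the vanishing ideal of `X`
    (hvan : ∀ x ∈ X, MvPolynomial.eval x g = 0) :
    ∃ x ∈ X, ∃ k : Fin n, MvPolynomial.eval x (MvPolynomial.pderiv k g) ≠ 0 := by
  obtain ⟨⟨o, hoO, k, hbk⟩, hbO⟩ := hb
  set d := MvPolynomial.pderiv k g with hd
  have hdeq : d = MvPolynomial.monomial o ((b k : ℝ))
      - ∑ o' ∈ O, (c o' * (o' k : ℝ)) •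
          MvPolynomial.monomial (o' - Finsupp.single k 1) (1 : ℝ) := by
    rw [hd, hgdef, map_sub, pderiv_monomial, map_sum]
    congr 1
    · rw [hbk, add_tsub_cancel_left, one_mul]
    · refine Finset.sum_congr rfl fun o' _ => ?_
      rw [smul_monomial, smul_eq_mul, mul_one, pderiv_monomial, smul_monomial, smul_eq_mul, mul_one]
  have hmem : d ∈ Submodule.span ℝ
      ((fun a => MvPolynomial.monomial a (1 : ℝ)) '' (O : Set (Fin n →₀ ℕ))) := by
    rw [hdeq]
    refine sub_mem ?_ ?_
    · have : MvPolynomial.monomial o ((b k : ℝ)) = (b k : ℝ) • MvPolynomial.monomial o (1 : ℝ) := by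
        rw [smul_monomial, smul_eq_mul, mul_one]
      rw [this]
      exact Submodule.smul_mem _ _ (Submodule.subset_span ⟨o, hoO, rfl⟩)
    · refine Submodule.sum_mem _ fun o' ho' => Submodule.smul_mem _ _
        (Submodule.subset_span ⟨o' - Finsupp.single k 1, ?_, rfl⟩)
      exact horder o' ho' _ tsub_le_self
  have hbkpos : b k = o k + 1 := by rw [hbk]; simp [add_comm]
  have hdne : d ≠ 0 := by
    intro h0
    have hc := congrArg (MvPolynomial.coeff o) (hdeq.symm.trans h0)
    rw [MvPolynomial.coeff_zero, MvPolynomial.coeff_sub, MvPolynomial.coeff_monomial,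
      if_pos rfl] at hc
    have hsum : MvPolynomial.coeff o (∑ o' ∈ O, (c o' * (o' k : ℝ)) •
        MvPolynomial.monomial (o' - Finsupp.single k 1) (1 : ℝ)) = 0 := by
      rw [MvPolynomial.coeff_sum]
      refine Finset.sum_eq_zero fun o' ho' => ?_
      rw [MvPolynomial.coeff_smul, MvPolynomial.coeff_monomial]
      by_cases hk : o' k = 0
      · simp [hk]
      · rw [if_neg, smul_zero]
        intro heq
        apply hbO
        have hle : Finsupp.single k 1 ≤ o' := by
          rw [Finsupp.single_le_iff]
          omega
        have : o' = b := by
          rw [hbk, ← heq, add_comm, tsub_add_cancel_of_le hle]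
        exact this ▸ ho'
    rw [hsum, sub_zero] at hc
    have : (b k : ℝ) ≠ 0 := by
      rw [hbkpos]; positivity
    exact this hc
  obtain ⟨x, hx, hne⟩ := hindep d hmem hdne
  exact ⟨x, hx, k, hne⟩
end
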